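/- Let ξ : {1/2,3/2,...,N-1/2} → {-1,0,1,2}, and let S(x) = #{0≤y<x : ξ(y+1/2)=-1} - #{0≤y<x : ξ(y+1/2)=1} with running minimum m = min_{0≤y<N} S(y). Then any ξ-matching M on [0,N] satisfies 2|M| ≤ C(N) - (2|m| + S(N)), where C(N) is the total number of edges e with ξ(e) ∈ {-1,1}. -/

import Mathlib

/-!
Cut `[0,N]` at a point `x`. Every pair of a matching either closes before `x`, and is then
determined by its `-1` edge in `[0,x)`, or closes at or after `x`, and is then determined by its
`+1` edge in `[x,N)`. Hence `|M| ≤ S(x) + #{+1 edges}` for every cut, and cutting where `S`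
attains its minimum `m ≤ 0` gives `2|M| ≤ C(N) - (2|m| + S(N))`.
-/

/-- A `ξ`-matching on the interval `[0,N]`: a set of ordered pairs `(e, e')` of edges
(edge `y + 1/2` is indexed by `y ∈ {0, …, N-1}`) with `e < e'`, `ξ e = -1`, `ξ e' = 1`,
no two pairs sharing an edge. -/
def IsXiMatching (ξ : ℕ → ℤ) (N : ℕ) (M : Finset (ℕ × ℕ)) : Prop :=
  (∀ p ∈ M, p.1 < p.2 ∧ p.2 < N ∧ ξ p.1 = -1 ∧ ξ p.2 = 1) ∧
  (∀ p ∈ M, ∀ q ∈ M, p ≠ q →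
    p.1 ≠ q.1 ∧ p.1 ≠ q.2 ∧ p.2 ≠ q.1 ∧ p.2 ≠ q.2)

open Finset

/-- The height `S(x)` of the lattice path of `ξ` after `x` edges. -/
def xiWalk (ξ : ℕ → ℤ) (x : ℕ) : ℤ :=
  #((range x).filter (fun y => ξ y = -1)) - #((range x).filter (fun y => ξ y = 1))

lemma card_filter_range_add_card_filter_Ico (P : ℕ → Prop) [DecidablePred P] {x N : ℕ}
    (hx : x ≤ N) :
    #((range x).filter P) + #((Ico x N).filter P) = #((range N).filter P) := by
  simp only [card_filter]
  exact sum_range_add_sum_Ico _ hx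

namespace IsXiMatching

variable {ξ : ℕ → ℤ} {N : ℕ} {M : Finset (ℕ × ℕ)}

lemma injOn_fst (hM : IsXiMatching ξ N M) : Set.InjOn Prod.fst (M : Set (ℕ × ℕ)) :=
  fun p hp q hq h => by_contra fun hpq => (hM.2 p hp q hq hpq).1 h

lemma injOn_snd (hM : IsXiMatching ξ N M) : Set.InjOn Prod.snd (M : Set (ℕ × ℕ)) :=
  fun p hp q hq h => by_contra fun hpq => (hM.2 p hp q hq hpq).2.2.2 h

lemma card_filter_snd_lt_le (hM : IsXiMatching ξ N M) (x : ℕ) :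
    #(M.filter (fun p => p.2 < x)) ≤ #((range x).filter (fun y => ξ y = -1)) := by
  refine card_le_card_of_injOn Prod.fst (fun p hp => ?_)
    (hM.injOn_fst.mono (coe_subset.2 (filter_subset _ _)))
  obtain ⟨hpM, hpx⟩ := mem_filter.1 hp
  obtain ⟨hlt, -, hξ, -⟩ := hM.1 p hpM
  exact mem_filter.2 ⟨mem_range.2 (hlt.trans hpx), hξ⟩

lemma card_filter_not_snd_lt_le (hM : IsXiMatching ξ N M) (x : ℕ) :
    #(M.filter (fun p => ¬ p.2 < x)) ≤ #((Ico x N).filter (fun y => ξ y = 1)) := by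
  refine card_le_card_of_injOn Prod.snd (fun p hp => ?_)
    (hM.injOn_snd.mono (coe_subset.2 (filter_subset _ _)))
  obtain ⟨hpM, hpx⟩ := mem_filter.1 hp
  obtain ⟨-, hpN, -, hξ⟩ := hM.1 p hpM
  exact mem_filter.2 ⟨mem_Ico.2 ⟨not_lt.1 hpx, hpN⟩, hξ⟩

lemma card_le_xiWalk_add (hM : IsXiMatching ξ N M) {x : ℕ} (hx : x ≤ N) :
    (#M : ℤ) ≤ xiWalk ξ x + #((range N).filter (fun y => ξ y = 1)) := by
  have hsplit := card_filter_add_card_filter_not (s := M) (fun p => p.2 < x)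
  have hlow := hM.card_filter_snd_lt_le x
  have hhigh := hM.card_filter_not_snd_lt_le x
  have hplus := card_filter_range_add_card_filter_Ico (fun y => ξ y = 1) hx
  unfold xiWalk
  omega

end IsXiMatching

/-- Any `ξ`-matching `M` on `[0,N]` satisfies
`2|M| ≤ C(N) - (2|m| + S(N))`. -/
theorem matching_card_le (N : ℕ) (hN : 0 < N) (ξ : ℕ → ℤ)
    (M : Finset (ℕ × ℕ)) (hM : IsXiMatching ξ N M) :
    (2 * M.card : ℤ) ≤
      (((Finset.range N).filter (fun y => ξ y = -1)).card
        + ((Finset.range N).filter (fun y => ξ y = 1)).card : ℤ)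
      - (2 * |(((Finset.range N).image (fun x : ℕ =>
            ((((Finset.range x).filter (fun y => ξ y = -1)).card : ℤ)
              - ((Finset.range x).filter (fun y => ξ y = 1)).card))).min'
            (by simpa using Finset.nonempty_range_iff.2 hN.ne'))|
          + ((((Finset.range N).filter (fun y => ξ y = -1)).card : ℤ)
            - ((Finset.range N).filter (fun y => ξ y = 1)).card)) := by
  change _ ≤ _ - (2 * |((range N).image (xiWalk ξ)).min' _| + xiWalk ξ N)
  set m := ((range N).image (xiWalk ξ)).min' _
  obtain ⟨x₀, hx₀, hm⟩ := mem_image.1 (min'_mem _ _ : m ∈ _)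
  have hm_nonpos : m ≤ 0 := min'_le _ _ (mem_image_of_mem _ (mem_range.2 hN))
  have hcard := hM.card_le_xiWalk_add (mem_range.1 hx₀).le
  rw [hm] at hcard
  rw [abs_of_nonpos hm_nonpos]
  unfold xiWalk
  linarith
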